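/- arXiv:1910.06165 — 5 statements merged into one kernel-verified Lean document; each statement's English description precedes it below -/
import Mathlib

section
/- Let R be a commutative ring with unit, X a set, F ⊆ R⟨X⟩ a set of noncommutative polynomials, and f ∈ R⟨X⟩. Then f lies in the two-sided ideal (F) generated by F if and only if f can be rewritten to zero using F. -/
open scoped BigOperators

/-- The free `R`-algebra `R⟨X⟩` on `X`, as the monoid algebra over `R`
of the free monoid `⟨X⟩` of words over `X`. -/
abbrev FreeAlg (R X : Type*) [CommRing R] := MonoidAlgebra R (FreeMonoid X)

/-- The monomial in `R⟨X⟩` corresponding to a word `m ∈ ⟨X⟩`. -/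
noncomputable def monom (R : Type*) [CommRing R] {X : Type*} (m : FreeMonoid X) : FreeAlg R X :=
  MonoidAlgebra.of R (FreeMonoid X) m

/-- `h` is obtained from `f` by a rewriting step using `g`: some monomial `m_g` in the
support of `g` divides a monomial `a·m_g·b` in the support of `f`, and
`h = f + λ·a·g·b` for some `λ ∈ R`. -/
def RewriteStep {R X : Type*} [CommRing R] (g f h : FreeAlg R X) : Prop :=
  ∃ (a b mg : FreeMonoid X) (lam : R),
    mg ∈ (g.coeff : FreeMonoid X →₀ R).support ∧
    a * mg * b ∈ (f.coeff : FreeMonoid X →₀ R).support ∧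
    h = f + lam • (monom R a * g * monom R b)

/-- `f` can be rewritten to `h` using the set `G`: there is a finite chain of rewriting
steps, each using an element of `G`, leading from `f` to `h`. -/
def RewritesTo {R X : Type*} [CommRing R] (G : Set (FreeAlg R X)) (f h : FreeAlg R X) : Prop :=
  Relation.ReflTransGen (fun p q => ∃ g ∈ G, RewriteStep g p q) f h

/-- Membership in the two-sided ideal `(F)` generated by `F`:
`f` is a finite sum `Σᵢ aᵢ·fᵢ·bᵢ` with `aᵢ, bᵢ ∈ R⟨X⟩` and `fᵢ ∈ F`. -/
def MemIdeal {R X : Type*} [CommRing R] (F : Set (FreeAlg R X)) (f : FreeAlg R X) : Prop :=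
  ∃ (n : ℕ) (a b g : Fin n → FreeAlg R X),
    (∀ i, g i ∈ F) ∧ f = ∑ i, a i * g i * b i

/-- Multiplying by monomials on both sides is `mapDomain` of `m ↦ u·m·v`. -/
lemma monom_mul_mul (R : Type*) [CommRing R] {X : Type*} (u v : FreeMonoid X) (g : FreeAlg R X) :
    monom R u * g * monom R v =
      MonoidAlgebra.ofCoeff (Finsupp.mapDomain (fun m => u * m * v) g.coeff) := by
  induction g using MonoidAlgebra.induction_linear with
  | zero => simp [Finsupp.mapDomain_zero]
  | add f h hf hh => rw [MonoidAlgebra.coeff_add, Finsupp.mapDomain_add, MonoidAlgebra.ofCoeff_add, ← hf, ← hh, mul_add, add_mul]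
  | single m c =>
      rw [MonoidAlgebra.coeff_single, Finsupp.mapDomain_single, MonoidAlgebra.ofCoeff_single]
      show MonoidAlgebra.single u 1 * MonoidAlgebra.single m c * MonoidAlgebra.single v 1 = _
      rw [MonoidAlgebra.single_mul_single, MonoidAlgebra.single_mul_single, one_mul, mul_one]

/-- Any finite sum of scaled "monomial-sandwiched" elements of `F` rewrites to zero. -/
lemma rewritesTo_zero_of_sum_terms {R X ι : Type*} [CommRing R] (F : Set (FreeAlg R X))
    (lam : ι → R) (u v : ι → FreeMonoid X) (g : ι → FreeAlg R X) (hg : ∀ i, g i ∈ F)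
    (s : Finset ι) :
    RewritesTo F (∑ i ∈ s, lam i • (monom R (u i) * g i * monom R (v i))) 0 := by
  classical
  induction s using Finset.strongInductionOn with
  | _ s ih =>
    set T : ι → FreeAlg R X := fun i => lam i • (monom R (u i) * g i * monom R (v i)) with hT
    by_cases h0 : (∑ i ∈ s, T i) = 0
    · rw [h0]; exact Relation.ReflTransGen.refl
    · obtain ⟨w, hw⟩ := Finsupp.support_nonempty_iff.mpr (mt MonoidAlgebra.coeff_eq_zero.mp h0)
      have hex : ∃ i ∈ s, (T i).coeff w ≠ 0 := by
        by_contra hc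
        push_neg at hc
        apply Finsupp.mem_support_iff.mp hw
        rw [MonoidAlgebra.coeff_sum, Finsupp.finset_sum_apply]
        exact Finset.sum_eq_zero hc
      obtain ⟨j, hjs, hj⟩ := hex
      have hwT : w ∈ (monom R (u j) * g j * monom R (v j)).coeff.support :=
        Finsupp.support_smul (Finsupp.mem_support_iff.mpr hj)
      rw [monom_mul_mul, MonoidAlgebra.coeff_ofCoeff] at hwT
      obtain ⟨m, hm, hmw⟩ : ∃ m ∈ (g j).coeff.support, u j * m * v j = w := by
        simpa using Finsupp.mapDomain_support hwT
      refine Relation.ReflTransGen.head ⟨g j, hg j, u j, v j, m, -lam j, hm, hmw ▸ hw, ?_⟩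
        (ih (s.erase j) (Finset.erase_ssubset hjs))
      rw [← Finset.add_sum_erase _ T hjs, neg_smul, hT]
      abel

/-- Expanding a two-sided product over the supports of the outer factors. -/
lemma expand_mul_mul {R X : Type*} [CommRing R] (a b g : FreeAlg R X) :
    a * g * b = ∑ u ∈ (a).coeff.support, ∑ v ∈ (b).coeff.support,
      ((a).coeff u * (b).coeff v) •
        (monom R u * g * monom R v) := by
  classical
  conv_lhs => rw [← MonoidAlgebra.sum_coeff_single a, ← MonoidAlgebra.sum_coeff_single b]
  rw [Finsupp.sum, Finsupp.sum, Finset.sum_mul, Finset.sum_mul]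
  refine Finset.sum_congr rfl fun u hu => ?_
  rw [Finset.mul_sum]
  refine Finset.sum_congr rfl fun v hv => ?_
  have h1 : (MonoidAlgebra.single u (a.coeff u) : FreeAlg R X) = a.coeff u • monom R u := by
    rw [monom, MonoidAlgebra.of_apply, MonoidAlgebra.smul_single', mul_one]
  have h2 : (MonoidAlgebra.single v (b.coeff v) : FreeAlg R X) = b.coeff v • monom R v := by
    rw [monom, MonoidAlgebra.of_apply, MonoidAlgebra.smul_single', mul_one]
  show MonoidAlgebra.single u (a.coeff u) * g * MonoidAlgebra.single v (b.coeff v) = _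
  rw [h1, h2, smul_mul_assoc, smul_mul_assoc, mul_smul_comm, smul_smul]

set_option maxHeartbeats 1000000 in
/-- `f` lies in the two-sided ideal generated by `F` if and only if
`f` can be rewritten to zero using `F`. -/
theorem memIdeal_iff_rewritesTo_zero {R X : Type*} [CommRing R]
    (F : Set (FreeAlg R X)) (f : FreeAlg R X) :
    MemIdeal F f ↔ RewritesTo F f 0 := by
  classical
  constructor
  · rintro ⟨n, a, b, g, hgF, rfl⟩
    have hexp : ∑ i, a i * g i * b i =
        ∑ p ∈ (Finset.univ : Finset (Fin n)).sigma
            (fun i => (a i).coeff.support ×ˢ (b i).coeff.support),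
          ((a p.1).coeff p.2.1 * (b p.1).coeff p.2.2) •
            (monom R p.2.1 * g p.1 * monom R p.2.2) := by
      rw [Finset.sum_sigma]
      refine Finset.sum_congr rfl fun i _ => ?_
      rw [expand_mul_mul, Finset.sum_product]
    rw [hexp]
    exact rewritesTo_zero_of_sum_terms (ι := (i : Fin n) × FreeMonoid X × FreeMonoid X) F
      (fun p => (a p.1).coeff p.2.1 * (b p.1).coeff p.2.2)
      (fun p => p.2.1) (fun p => p.2.2) (fun p => g p.1) (fun p => hgF p.1) _
  · intro h
    induction h using Relation.ReflTransGen.head_induction_on with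
    | refl => exact ⟨0, fun i => i.elim0, fun i => i.elim0, fun i => i.elim0,
        fun i => i.elim0, by simp⟩
    | head hstep _ ih =>
      obtain ⟨g, hgF, aa, bb, mg, lam, _, _, hq⟩ := hstep
      obtain ⟨n, A, B, G, hG, hqsum⟩ := ih
      refine ⟨n + 1, Fin.snoc A ((-lam) • monom R aa), Fin.snoc B (monom R bb),
        Fin.snoc G g, ?_, ?_⟩
      · intro i
        refine Fin.lastCases ?_ ?_ i
        · simpa using hgF
        · intro j; simpa using hG j
      · rw [Fin.sum_univ_castSucc]
        simp only [Fin.snoc_castSucc, Fin.snoc_last]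
        rw [← hqsum, smul_mul_assoc, smul_mul_assoc, neg_smul]
        have : _ = _ := hq
        rw [this]
        abel
end

section
/- Let f, g ∈ R⟨X⟩ be compatible with a labelled quiver Q such that s(f) ∩ t(g) ≠ ∅. Then the product fg is compatible with Q and σ(fg) ⊇ {(u, w) ∈ s(g) × t(f) : ∃ v ∈ s(f) ∩ t(g), (u, v) ∈ σ(g) and (v, w) ∈ σ(f)}. If in addition f and g are uniformly compatible with Q and fg ≠ 0, then equality holds in this inclusion and fg is uniformly compatible with Q. -/
open scoped BigOperators

/-- A labelled quiver `Q = (V, E, X, s, t, l)`: a directed multigraph with vertex set `V`,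
edge set `E`, source and target maps `s, t : E → V` and labelling `l : E → X`. -/
structure LabelledQuiver (V E X : Type*) where
  src : E → V
  tgt : E → V
  lab : E → X

/-- Paths in a labelled quiver `Q`; `LQPath Q u w` is the type of paths with source `u` and
target `w`.  `nil v` is the empty path at `v`; `cons e p` appends the edge `e` after `p`. -/
inductive LQPath {V E X : Type*} (Q : LabelledQuiver V E X) : V → V → Type _ where
  | nil (v : V) : LQPath Q v v
  | cons {u : V} (e : E) (p : LQPath Q u (Q.src e)) : LQPath Q u (Q.tgt e)

namespace LQPath
variable {V E X : Type*} {Q : LabelledQuiver V E X}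
/-- The label `l(p) = l(eₙ)⋯l(e₁) ∈ ⟨X⟩` of a path; the empty path has label `1`. -/
def label : {u w : V} → LQPath Q u w → FreeMonoid X
  | _, _, .nil _ => 1
  | _, _, .cons e p => FreeMonoid.of (Q.lab e) * p.label
end LQPath

namespace LabelledQuiver

variable {V E X : Type*} (Q : LabelledQuiver V E X)

/-- The set of signatures `σ(m) = {(s(p), t(p)) : p a path in Q with l(p) = m}`. -/
def sigmaM (m : FreeMonoid X) : Set (V × V) :=
  {vw | ∃ p : LQPath Q vw.1 vw.2, p.label = m}

variable {R : Type*} [CommRing R]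

/-- The set of signatures `σ(f) = ⋂_{m ∈ supp(f)} σ(m)` of a polynomial. -/
def sigmaP (f : FreeAlg R X) : Set (V × V) :=
  ⋂ m ∈ (f.coeff : FreeMonoid X →₀ R).support, Q.sigmaM m

/-- `f` is compatible with `Q` if `σ(f) ≠ ∅`. -/
def Compatible (f : FreeAlg R X) : Prop :=
  (Q.sigmaP f).Nonempty

/-- `f` is uniformly compatible with `Q` if it is compatible and all monomials in its
support have the same set of signatures. -/
def UniformlyCompatible (f : FreeAlg R X) : Prop :=
  Q.Compatible f ∧
    ∀ m ∈ (f.coeff : FreeMonoid X →₀ R).support, ∀ m' ∈ (f.coeff : FreeMonoid X →₀ R).support,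
      Q.sigmaM m = Q.sigmaM m'

/-- The set of sources `s(f)` of a polynomial: the projection of `σ(f)` to the first
component. -/
def srcSet (f : FreeAlg R X) : Set V := Prod.fst '' Q.sigmaP f

/-- The set of targets `t(f)` of a polynomial: the projection of `σ(f)` to the second
component. -/
def tgtSet (f : FreeAlg R X) : Set V := Prod.snd '' Q.sigmaP f

end LabelledQuiver

/-- The set `{(u, w) ∈ s(g) × t(f) : ∃ v ∈ s(f) ∩ t(g), (u, v) ∈ σ(g) ∧ (v, w) ∈ σ(f)}`. -/
def prodSig {V E X R : Type*} [CommRing R] (Q : LabelledQuiver V E X)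
    (f g : FreeAlg R X) : Set (V × V) :=
  {uw | uw.1 ∈ Q.srcSet g ∧ uw.2 ∈ Q.tgtSet f ∧
    ∃ v, v ∈ Q.srcSet f ∩ Q.tgtSet g ∧ (uw.1, v) ∈ Q.sigmaP g ∧ (v, uw.2) ∈ Q.sigmaP f}

/-! A path labelled `a * b` splits at a vertex into a path labelled `b` followed by one labelled
`a`, so `σ(ab) = σ(b) ○ σ(a)` as relations. Every monomial of `fg` is such a product with
`a ∈ supp f` and `b ∈ supp g`, hence `σ(g) ○ σ(f) ⊆ σ(fg)`; this composite is `prodSig Q f g`, and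
it is nonempty as soon as `s(f) ∩ t(g)` is. For uniform `f` and `g` we have `σ(a) = σ(f)` and
`σ(b) = σ(g)`, so every monomial of `fg` has the same signature set `σ(g) ○ σ(f)`. -/

open scoped SetRel

namespace LQPath
variable {V E X : Type*} {Q : LabelledQuiver V E X}

def comp : {u v w : V} → LQPath Q v w → LQPath Q u v → LQPath Q u w
  | _, _, _, .nil _, p => p
  | _, _, _, .cons e q, p => .cons e (q.comp p)

@[simp]
theorem label_comp : ∀ {u v w : V} (q : LQPath Q v w) (p : LQPath Q u v),
    (q.comp p).label = q.label * p.label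
  | _, _, _, .nil _, p => by rw [comp, label, one_mul]
  | _, _, _, .cons e q, p => by simp only [comp, label, label_comp q p, mul_assoc]

theorem exists_comp_of_label_eq_mul : ∀ {u w : V} (r : LQPath Q u w) {a b : FreeMonoid X},
    r.label = a * b → ∃ (v : V) (q : LQPath Q v w) (p : LQPath Q u v), q.label = a ∧ p.label = b
  | u, _, .nil _, a, b, h => by
    obtain ⟨rfl, rfl⟩ := mul_eq_one'.mp (h.symm.trans (by rw [label]))
    exact ⟨u, .nil u, .nil u, by rw [label], by rw [label]⟩
  | _, _, .cons e r, a, b, h => by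
    induction a using FreeMonoid.casesOn with
    | one => exact ⟨_, .nil _, .cons e r, by rw [label], by rw [h, one_mul]⟩
    | of_mul x a =>
      rw [label, mul_assoc] at h
      have h' : Q.lab e :: r.label.toList = x :: (a * b).toList := congrArg FreeMonoid.toList h
      obtain ⟨hx, hr⟩ := List.cons.inj h'
      obtain ⟨v, q, p, rfl, rfl⟩ := r.exists_comp_of_label_eq_mul (FreeMonoid.toList.injective hr)
      exact ⟨v, .cons e q, p, by rw [label, hx], rfl⟩

end LQPath

namespace LabelledQuiver
variable {V E X : Type*} (Q : LabelledQuiver V E X)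

theorem sigmaM_mul (a b : FreeMonoid X) : Q.sigmaM (a * b) = Q.sigmaM b ○ Q.sigmaM a := by
  ext ⟨u, w⟩
  constructor
  · rintro ⟨r, hr⟩
    obtain ⟨v, q, p, hq, hp⟩ := r.exists_comp_of_label_eq_mul hr
    exact ⟨v, ⟨p, hp⟩, ⟨q, hq⟩⟩
  · rintro ⟨v, ⟨p, rfl⟩, ⟨q, rfl⟩⟩
    exact ⟨q.comp p, LQPath.label_comp q p⟩

variable {R : Type*} [CommRing R]

theorem mem_sigmaP {f : FreeAlg R X} {uw : V × V} :
    uw ∈ Q.sigmaP f ↔ ∀ m ∈ f.coeff.support, uw ∈ Q.sigmaM m := by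
  simp only [sigmaP, Set.mem_iInter]

theorem sigmaP_eq_of_forall_sigmaM_eq {f : FreeAlg R X} (hf : f ≠ 0) {S : Set (V × V)}
    (hS : ∀ m ∈ f.coeff.support, Q.sigmaM m = S) : Q.sigmaP f = S := by
  obtain ⟨m₀, hm₀⟩ := Finsupp.support_nonempty_iff.mpr (mt MonoidAlgebra.coeff_eq_zero.mp hf)
  ext uw
  rw [mem_sigmaP]
  exact ⟨fun h => hS m₀ hm₀ ▸ h m₀ hm₀, fun h m hm => (hS m hm).symm ▸ h⟩

variable {Q} in
theorem UniformlyCompatible.sigmaM_eq {f : FreeAlg R X} (hf : Q.UniformlyCompatible f)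
    {m : FreeMonoid X} (hm : m ∈ f.coeff.support) : Q.sigmaM m = Q.sigmaP f := by
  ext uw
  rw [mem_sigmaP]
  exact ⟨fun h m' hm' => hf.2 m' hm' m hm ▸ h, fun h => h m hm⟩

theorem sigmaP_comp_nonempty {f g : FreeAlg R X} (hst : (Q.srcSet f ∩ Q.tgtSet g).Nonempty) :
    (Q.sigmaP g ○ Q.sigmaP f).Nonempty := by
  obtain ⟨v, ⟨⟨_, w⟩, hf, rfl⟩, ⟨⟨u, _⟩, hg, rfl⟩⟩ := hst
  exact ⟨(u, w), _, hg, hf⟩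

theorem exists_sigmaM_eq_of_mem_support_mul {f g : FreeAlg R X} {m : FreeMonoid X}
    (hm : m ∈ (f * g).coeff.support) :
    ∃ a ∈ f.coeff.support, ∃ b ∈ g.coeff.support, Q.sigmaM m = Q.sigmaM b ○ Q.sigmaM a := by
  classical
  obtain ⟨a, ha, b, hb, rfl⟩ := Finset.mem_mul.mp (MonoidAlgebra.support_coeff_mul_subset f g hm)
  exact ⟨a, ha, b, hb, Q.sigmaM_mul a b⟩

theorem sigmaP_comp_subset_sigmaP_mul (f g : FreeAlg R X) :
    Q.sigmaP g ○ Q.sigmaP f ⊆ Q.sigmaP (f * g) := by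
  rintro ⟨u, w⟩ ⟨v, hg, hf⟩
  refine Q.mem_sigmaP.mpr fun m hm => ?_
  obtain ⟨a, ha, b, hb, hσ⟩ := Q.exists_sigmaM_eq_of_mem_support_mul hm
  rw [hσ]
  exact ⟨v, Q.mem_sigmaP.mp hg b hb, Q.mem_sigmaP.mp hf a ha⟩

variable {Q} in
theorem UniformlyCompatible.sigmaM_eq_of_mem_support_mul {f g : FreeAlg R X}
    (hf : Q.UniformlyCompatible f) (hg : Q.UniformlyCompatible g) {m : FreeMonoid X}
    (hm : m ∈ (f * g).coeff.support) : Q.sigmaM m = Q.sigmaP g ○ Q.sigmaP f := by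
  obtain ⟨a, ha, b, hb, hσ⟩ := Q.exists_sigmaM_eq_of_mem_support_mul hm
  rw [hσ, hf.sigmaM_eq ha, hg.sigmaM_eq hb]

variable {Q} in
theorem UniformlyCompatible.sigmaP_mul {f g : FreeAlg R X} (hf : Q.UniformlyCompatible f)
    (hg : Q.UniformlyCompatible g) (hfg : f * g ≠ 0) :
    Q.sigmaP (f * g) = Q.sigmaP g ○ Q.sigmaP f :=
  Q.sigmaP_eq_of_forall_sigmaM_eq hfg fun _ hm => hf.sigmaM_eq_of_mem_support_mul hg hm

end LabelledQuiver

theorem prodSig_eq_sigmaP_comp {V E X R : Type*} [CommRing R] (Q : LabelledQuiver V E X)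
    (f g : FreeAlg R X) : prodSig Q f g = Q.sigmaP g ○ Q.sigmaP f := by
  ext ⟨u, w⟩
  constructor
  · rintro ⟨-, -, v, -, hg, hf⟩
    exact ⟨v, hg, hf⟩
  · rintro ⟨v, hg, hf⟩
    exact ⟨⟨_, hg, rfl⟩, ⟨_, hf, rfl⟩, v, ⟨⟨_, hf, rfl⟩, ⟨_, hg, rfl⟩⟩, hg, hf⟩

theorem mul_compatible_general {R V E X : Type*} [CommRing R] (Q : LabelledQuiver V E X)
    (f g : FreeAlg R X)
    (hst : (Q.srcSet f ∩ Q.tgtSet g).Nonempty) :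
    Q.Compatible (f * g) ∧ prodSig Q f g ⊆ Q.sigmaP (f * g) ∧
      (Q.UniformlyCompatible f → Q.UniformlyCompatible g → f * g ≠ 0 →
        Q.sigmaP (f * g) = prodSig Q f g ∧ Q.UniformlyCompatible (f * g)) := by
  have hsub := Q.sigmaP_comp_subset_sigmaP_mul f g
  have hcomp : Q.Compatible (f * g) := (Q.sigmaP_comp_nonempty hst).mono hsub
  rw [prodSig_eq_sigmaP_comp]
  refine ⟨hcomp, hsub, fun hf hg hfg => ⟨hf.sigmaP_mul hg hfg, hcomp, fun m hm m' hm' => ?_⟩⟩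
  rw [hf.sigmaM_eq_of_mem_support_mul hg hm, hf.sigmaM_eq_of_mem_support_mul hg hm']

/-- If `f, g` are compatible with `Q` and `s(f) ∩ t(g) ≠ ∅`, then `f·g` is
compatible with `Q` and `σ(f·g)` contains
`{(u, w) ∈ s(g) × t(f) : ∃ v ∈ s(f) ∩ t(g), (u, v) ∈ σ(g) ∧ (v, w) ∈ σ(f)}`; if in addition
`f` and `g` are uniformly compatible and `f·g ≠ 0`, then equality holds and `f·g` is
uniformly compatible. -/
theorem mul_compatible {R V E X : Type*} [CommRing R] (Q : LabelledQuiver V E X)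
    (f g : FreeAlg R X) (hf : Q.Compatible f) (hg : Q.Compatible g)
    (hst : (Q.srcSet f ∩ Q.tgtSet g).Nonempty) :
    Q.Compatible (f * g) ∧ prodSig Q f g ⊆ Q.sigmaP (f * g) ∧
      (Q.UniformlyCompatible f → Q.UniformlyCompatible g → f * g ≠ 0 →
        Q.sigmaP (f * g) = prodSig Q f g ∧ Q.UniformlyCompatible (f * g)) :=
  mul_compatible_general Q f g hst
end

section
/- Let f, g ∈ R⟨X⟩ be uniformly compatible with a labelled quiver Q and suppose fg ≠ 0. Then for every pair of vertices (u, w) with fg ∈ R⟨X⟩_{u,w} there exists a vertex v ∈ V lying on some path in Q from u to w such that f ∈ R⟨X⟩_{v,w} and g ∈ R⟨X⟩_{u,v}. -/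
open scoped BigOperators

/-! A nonzero product `f * g` has a monomial `m_f * m_g` in its support with `m_f ∈ supp f` and
`m_g ∈ supp g`. A path labelled `m_f * m_g` from `u` to `w` splits at some vertex `v` into a path
labelled `m_g` from `u` to `v` followed by one labelled `m_f` from `v` to `w`. By uniform
compatibility, `(v, w) ∈ σ(m_f)` already gives `(v, w) ∈ σ(f)`, and likewise `(u, v) ∈ σ(g)`. -/

theorem MonoidAlgebra.exists_mul_mem_support_of_mul_ne_zero {k G : Type*} [Semiring k] [Mul G]
    {x y : MonoidAlgebra k G} (hxy : x * y ≠ 0) :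
    ∃ a ∈ x.coeff.support, ∃ b ∈ y.coeff.support, a * b ∈ (x * y).coeff.support := by
  classical
  obtain ⟨m, hm⟩ := Finsupp.support_nonempty_iff.mpr (mt MonoidAlgebra.coeff_eq_zero.mp hxy)
  obtain ⟨a, ha, b, hb, rfl⟩ := Finset.mem_mul.mp (MonoidAlgebra.support_coeff_mul_subset x y hm)
  exact ⟨a, ha, b, hb, hm⟩

namespace LQPath

variable {V E X : Type*} {Q : LabelledQuiver V E X}

@[simp]
lemma label_nil (v : V) : (nil (Q := Q) v).label = 1 := by
  rw [label]

@[simp]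
lemma label_cons (e : E) {u : V} (p : LQPath Q u (Q.src e)) :
    (cons e p).label = FreeMonoid.of (Q.lab e) * p.label := by
  rw [label]

theorem exists_split_of_label_eq_mul {u w : V} (p : LQPath Q u w) {a b : FreeMonoid X}
    (h : p.label = a * b) :
    ∃ v, (∃ r : LQPath Q v w, r.label = a) ∧ ∃ q : LQPath Q u v, q.label = b := by
  induction p generalizing a with
  | nil =>
    obtain ⟨rfl, rfl⟩ := mul_eq_one'.mp (h.symm.trans (label_nil _))
    exact ⟨u, ⟨nil u, label_nil u⟩, nil u, label_nil u⟩
  | cons e p ih =>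
    induction a using FreeMonoid.casesOn with
    | one => exact ⟨_, ⟨nil _, label_nil _⟩, cons e p, by simpa using h⟩
    | of_mul x a =>
      have hlist := congrArg FreeMonoid.toList h
      simp only [label_cons, mul_assoc, FreeMonoid.toList_of_mul, List.cons.injEq] at hlist
      obtain ⟨v, ⟨r, hr⟩, hq⟩ := ih (FreeMonoid.toList.injective hlist.2)
      exact ⟨v, ⟨cons e r, by rw [label_cons, hr, hlist.1]⟩, hq⟩

end LQPath

namespace LabelledQuiver

variable {V E X : Type*} {Q : LabelledQuiver V E X}

theorem exists_of_mem_sigmaM_mul {u w : V} {a b : FreeMonoid X}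
    (h : (u, w) ∈ Q.sigmaM (a * b)) : ∃ v, (v, w) ∈ Q.sigmaM a ∧ (u, v) ∈ Q.sigmaM b :=
  let ⟨_, hp⟩ := h
  LQPath.exists_split_of_label_eq_mul _ hp

variable {R : Type*} [CommRing R]

theorem sigmaP_subset_sigmaM {f : FreeAlg R X} {m : FreeMonoid X} (hm : m ∈ f.coeff.support) :
    Q.sigmaP f ⊆ Q.sigmaM m :=
  Set.biInter_subset_of_mem hm

theorem UniformlyCompatible.mem_sigmaP_of_mem_sigmaM {f : FreeAlg R X}
    (hf : Q.UniformlyCompatible f) {m : FreeMonoid X} (hm : m ∈ f.coeff.support) {vw : V × V}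
    (hvw : vw ∈ Q.sigmaM m) : vw ∈ Q.sigmaP f :=
  Set.mem_iInter₂.mpr fun _ hm' => hf.2 _ hm' m hm ▸ hvw

end LabelledQuiver

/-- If `f, g` are uniformly compatible with `Q` and `f·g ≠ 0`, then for every
`(u, w)` with `f·g ∈ R⟨X⟩_{u,w}` there is a vertex `v` lying on some path from `u` to `w`
(i.e. there is a path from `u` to `v` and a path from `v` to `w`) such that
`f ∈ R⟨X⟩_{v,w}` and `g ∈ R⟨X⟩_{u,v}`. -/
theorem factor_signature {R V E X : Type*} [CommRing R] (Q : LabelledQuiver V E X)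
    (f g : FreeAlg R X) (hf : Q.UniformlyCompatible f) (hg : Q.UniformlyCompatible g)
    (hne : f * g ≠ 0) (u w : V) (huw : (u, w) ∈ Q.sigmaP (f * g)) :
    ∃ v : V, Nonempty (LQPath Q u v) ∧ Nonempty (LQPath Q v w) ∧
      (v, w) ∈ Q.sigmaP f ∧ (u, v) ∈ Q.sigmaP g := by
  obtain ⟨mf, hmf, mg, hmg, hm⟩ := MonoidAlgebra.exists_mul_mem_support_of_mul_ne_zero hne
  obtain ⟨v, ⟨r, hr⟩, ⟨q, hq⟩⟩ :=
    LabelledQuiver.exists_of_mem_sigmaM_mul (LabelledQuiver.sigmaP_subset_sigmaM hm huw)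
  exact ⟨v, ⟨q⟩, ⟨r⟩, hf.mem_sigmaP_of_mem_sigmaM hmf ⟨r, hr⟩,
    hg.mem_sigmaP_of_mem_sigmaM hmg ⟨q, hq⟩⟩
end

section
/- Let R be a commutative ring with unit and let V₁, V₂, V₃, V₄ be R-modules. Let A : V₁ → V₂, B : V₃ → V₄, Y : V₄ → V₂, Z : V₁ → V₃, A⁻ : V₂ → V₁, and S⁻ : V₄ → V₃ be R-module homomorphisms such that A ∘ A⁻ ∘ A = A, A ∘ A⁻ ∘ (Y ∘ B ∘ Z) = Y ∘ B ∘ Z, (Y ∘ B ∘ Z) ∘ A⁻ ∘ A = Y ∘ B ∘ Z, and S ∘ S⁻ ∘ S = S where S := B + B ∘ Z ∘ A⁻ ∘ Y ∘ B. Then A⁻ − A⁻ ∘ Y ∘ B ∘ S⁻ ∘ B ∘ Z ∘ A⁻ is an inner inverse of A + Y ∘ B ∘ Z, i.e. (A + Y∘B∘Z) ∘ (A⁻ − A⁻∘Y∘B∘S⁻∘B∘Z∘A⁻) ∘ (A + Y∘B∘Z) = A + Y∘B∘Z. -/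
/-!
Write `M = A + U` with `U = Y ∘ B ∘ Z` and `S = B + B ∘ Z ∘ A⁻ ∘ Y ∘ B`, so that `Y ∘ S ∘ Z = U + U ∘ A⁻ ∘ U`.
The range conditions on `U` give `M ∘ A⁻ ∘ M = M + Y ∘ S ∘ Z`, and they let the correction term
factor through `S` on both sides: `M ∘ A⁻ ∘ Y ∘ B = A ∘ A⁻ ∘ Y ∘ S` and `B ∘ Z ∘ A⁻ ∘ M = S ∘ Z ∘ A⁻ ∘ A`.
Hence `S ∘ S⁻ ∘ S = S` collapses the correction to `A ∘ A⁻ ∘ (Y ∘ S ∘ Z) ∘ A⁻ ∘ A = Y ∘ S ∘ Z`,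
which cancels the surplus of `M ∘ A⁻ ∘ M`.
-/

namespace LinearMap

variable {R V₁ V₂ V₃ V₄ : Type*} [Semiring R]
  [AddCommMonoid V₁] [Module R V₁] [AddCommMonoid V₂] [Module R V₂]
  [AddCommMonoid V₃] [Module R V₃] [AddCommMonoid V₄] [Module R V₄]

theorem add_comp_inner_comp_add {A U : V₁ →ₗ[R] V₂} {Ai : V₂ →ₗ[R] V₁}
    (hA : A ∘ₗ Ai ∘ₗ A = A) (hAU : A ∘ₗ Ai ∘ₗ U = U) (hUA : U ∘ₗ Ai ∘ₗ A = U) :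
    (A + U) ∘ₗ Ai ∘ₗ (A + U) = (A + U) + (U + U ∘ₗ Ai ∘ₗ U) := by
  simp only [comp_add, add_comp, hA, hAU, hUA]

theorem comp_inner_comp_inner_comp_of_range {A U : V₁ →ₗ[R] V₂} {Ai : V₂ →ₗ[R] V₁}
    (hAU : A ∘ₗ Ai ∘ₗ U = U) (hUA : U ∘ₗ Ai ∘ₗ A = U) :
    A ∘ₗ Ai ∘ₗ (U + U ∘ₗ Ai ∘ₗ U) ∘ₗ Ai ∘ₗ A = U + U ∘ₗ Ai ∘ₗ U := by
  have hAU' : A ∘ₗ Ai ∘ₗ U ∘ₗ Ai ∘ₗ U = U ∘ₗ Ai ∘ₗ U := by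
    simpa only [comp_assoc] using congrArg (· ∘ₗ Ai ∘ₗ U) hAU
  simp only [add_comp, comp_add, comp_assoc, hUA, hAU, hAU']

variable (A : V₁ →ₗ[R] V₂) (B : V₃ →ₗ[R] V₄) (Y : V₄ →ₗ[R] V₂) (Z : V₁ →ₗ[R] V₃)
  (Ai : V₂ →ₗ[R] V₁)

theorem comp_woodbury_comp :
    Y ∘ₗ (B + B ∘ₗ Z ∘ₗ Ai ∘ₗ Y ∘ₗ B) ∘ₗ Z =
      Y ∘ₗ B ∘ₗ Z + (Y ∘ₗ B ∘ₗ Z) ∘ₗ Ai ∘ₗ (Y ∘ₗ B ∘ₗ Z) := by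
  simp only [add_comp, comp_add, comp_assoc]

variable {A B Y Z Ai}

theorem add_comp_inner_comp_comp_eq (h : A ∘ₗ Ai ∘ₗ (Y ∘ₗ B ∘ₗ Z) = Y ∘ₗ B ∘ₗ Z) :
    (A + Y ∘ₗ B ∘ₗ Z) ∘ₗ Ai ∘ₗ Y ∘ₗ B = A ∘ₗ Ai ∘ₗ Y ∘ₗ (B + B ∘ₗ Z ∘ₗ Ai ∘ₗ Y ∘ₗ B) := by
  have h' : A ∘ₗ Ai ∘ₗ Y ∘ₗ B ∘ₗ Z ∘ₗ Ai ∘ₗ Y ∘ₗ B = Y ∘ₗ B ∘ₗ Z ∘ₗ Ai ∘ₗ Y ∘ₗ B := by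
    simpa only [comp_assoc] using congrArg (· ∘ₗ Ai ∘ₗ Y ∘ₗ B) h
  simp only [add_comp, comp_add, comp_assoc, h']

theorem comp_comp_inner_comp_add_eq (h : (Y ∘ₗ B ∘ₗ Z) ∘ₗ Ai ∘ₗ A = Y ∘ₗ B ∘ₗ Z) :
    B ∘ₗ Z ∘ₗ Ai ∘ₗ (A + Y ∘ₗ B ∘ₗ Z) = (B + B ∘ₗ Z ∘ₗ Ai ∘ₗ Y ∘ₗ B) ∘ₗ Z ∘ₗ Ai ∘ₗ A := by
  have h' : B ∘ₗ Z ∘ₗ Ai ∘ₗ Y ∘ₗ B ∘ₗ Z ∘ₗ Ai ∘ₗ A = B ∘ₗ Z ∘ₗ Ai ∘ₗ Y ∘ₗ B ∘ₗ Z := by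
    simpa only [comp_assoc] using congrArg (B ∘ₗ Z ∘ₗ Ai ∘ₗ ·) h
  simp only [add_comp, comp_add, comp_assoc, h']

end LinearMap

open LinearMap in
/-- Sherman–Morrison–Woodbury-type formula for inner inverses of
`R`-module homomorphisms: if `A ∘ A⁻ ∘ A = A`, `A ∘ A⁻ ∘ (Y∘B∘Z) = Y∘B∘Z`,
`(Y∘B∘Z) ∘ A⁻ ∘ A = Y∘B∘Z` and `S ∘ S⁻ ∘ S = S` where `S = B + B∘Z∘A⁻∘Y∘B`, then
`A⁻ − A⁻∘Y∘B∘S⁻∘B∘Z∘A⁻` is an inner inverse of `A + Y∘B∘Z`. -/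
theorem woodbury_innerInverse {R V₁ V₂ V₃ V₄ : Type*} [CommRing R]
    [AddCommGroup V₁] [Module R V₁] [AddCommGroup V₂] [Module R V₂]
    [AddCommGroup V₃] [Module R V₃] [AddCommGroup V₄] [Module R V₄]
    (A : V₁ →ₗ[R] V₂) (B : V₃ →ₗ[R] V₄) (Y : V₄ →ₗ[R] V₂) (Z : V₁ →ₗ[R] V₃)
    (Ai : V₂ →ₗ[R] V₁) (Si : V₄ →ₗ[R] V₃)
    (h₁ : A ∘ₗ Ai ∘ₗ A = A)
    (h₂ : A ∘ₗ Ai ∘ₗ (Y ∘ₗ B ∘ₗ Z) = Y ∘ₗ B ∘ₗ Z)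
    (h₃ : (Y ∘ₗ B ∘ₗ Z) ∘ₗ Ai ∘ₗ A = Y ∘ₗ B ∘ₗ Z)
    (h₄ : (B + B ∘ₗ Z ∘ₗ Ai ∘ₗ Y ∘ₗ B) ∘ₗ Si ∘ₗ (B + B ∘ₗ Z ∘ₗ Ai ∘ₗ Y ∘ₗ B) =
      B + B ∘ₗ Z ∘ₗ Ai ∘ₗ Y ∘ₗ B) :
    (A + Y ∘ₗ B ∘ₗ Z) ∘ₗ (Ai - Ai ∘ₗ Y ∘ₗ B ∘ₗ Si ∘ₗ B ∘ₗ Z ∘ₗ Ai) ∘ₗ (A + Y ∘ₗ B ∘ₗ Z) =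
      A + Y ∘ₗ B ∘ₗ Z := by
  have hS := comp_woodbury_comp B Y Z Ai
  have hL := add_comp_inner_comp_comp_eq h₂
  have hR := comp_comp_inner_comp_add_eq h₃
  set U := Y ∘ₗ B ∘ₗ Z
  set S := B + B ∘ₗ Z ∘ₗ Ai ∘ₗ Y ∘ₗ B
  calc (A + U) ∘ₗ (Ai - Ai ∘ₗ Y ∘ₗ B ∘ₗ Si ∘ₗ B ∘ₗ Z ∘ₗ Ai) ∘ₗ (A + U)
      = (A + U) ∘ₗ Ai ∘ₗ (A + U) -
          ((A + U) ∘ₗ Ai ∘ₗ Y ∘ₗ B) ∘ₗ Si ∘ₗ (B ∘ₗ Z ∘ₗ Ai ∘ₗ (A + U)) := by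
        simp only [sub_comp, comp_sub, comp_assoc]
    _ = (A + U) + Y ∘ₗ S ∘ₗ Z - A ∘ₗ Ai ∘ₗ (Y ∘ₗ S ∘ₗ Z) ∘ₗ Ai ∘ₗ A := by
        rw [hL, hR, add_comp_inner_comp_add h₁ h₂ h₃, ← hS]
        congr 1
        simpa only [comp_assoc] using congrArg (A ∘ₗ Ai ∘ₗ Y ∘ₗ · ∘ₗ Z ∘ₗ Ai ∘ₗ A) h₄
    _ = A + U := by
        rw [hS, comp_inner_comp_inner_comp_of_range h₂ h₃, add_sub_cancel_right]
end

section
/- Let R be a (not necessarily commutative) ring with unit and let a₀, a₁, b₁, b₂, d, h₁, h̃₁, h₂, h̃₂, i be elements of R satisfying: d² + a₁·d + a₀ = (d − b₁)·(d − b₂), d·i = 1, d·h₁ = h₁·d + b₁·h₁, d·h₂ = h₂·d + b₂·h₂, h₁·h̃₁ = 1, and h₂·h̃₂ = 1. Then (d² + a₁·d + a₀)·h₂·i·h̃₂·h₁·i·h̃₁ = 1. -/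
/-! The Leibniz rule says that `hⱼ` intertwines `d` with `d − bⱼ`, i.e. `(d − bⱼ)·hⱼ = hⱼ·d`, so
`hⱼ·i·h̃ⱼ` is a right inverse of `d − bⱼ` ("variation of constants" for a first-order equation).
Right inverses of the two factors of `L = (d − b₁)(d − b₂)` compose, in reverse order, to one of `L`. -/

theorem sub_mul_eq_mul_of_mul_eq_add {R : Type*} [Ring R] {b d h : R}
    (hdh : d * h = h * d + b * h) : (d - b) * h = h * d := by
  rw [sub_mul, hdh, add_sub_cancel_right]

theorem mul_conj_eq_one_of_mul_eq_mul {M : Type*} [Monoid M] {c d h h' i : M}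
    (hch : c * h = h * d) (hdi : d * i = 1) (hh : h * h' = 1) : c * (h * i * h') = 1 := by
  rw [← mul_assoc, ← mul_assoc, hch, mul_assoc h, hdi, mul_one, hh]

/-- The algebraic identity underlying the variation-of-constants solution of
a reducible second-order linear ODE: in any ring, if `d² + a₁d + a₀ = (d − b₁)(d − b₂)`,
`d·i = 1`, `d·hⱼ = hⱼ·d + bⱼ·hⱼ` and `hⱼ·h̃ⱼ = 1` for `j = 1, 2`, then
`(d² + a₁d + a₀)·h₂·i·h̃₂·h₁·i·h̃₁ = 1`. -/
theorem ode_factorization_right_inverse {R : Type*} [Ring R]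
    (a₀ a₁ b₁ b₂ d h₁ h₁' h₂ h₂' i : R)
    (hfact : d ^ 2 + a₁ * d + a₀ = (d - b₁) * (d - b₂))
    (hdi : d * i = 1)
    (hdh₁ : d * h₁ = h₁ * d + b₁ * h₁)
    (hdh₂ : d * h₂ = h₂ * d + b₂ * h₂)
    (hh₁ : h₁ * h₁' = 1)
    (hh₂ : h₂ * h₂' = 1) :
    (d ^ 2 + a₁ * d + a₀) * (h₂ * i * h₂' * h₁ * i * h₁') = 1 := by
  have inv₁ := mul_conj_eq_one_of_mul_eq_mul (sub_mul_eq_mul_of_mul_eq_add hdh₁) hdi hh₁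
  have inv₂ := mul_conj_eq_one_of_mul_eq_mul (sub_mul_eq_mul_of_mul_eq_add hdh₂) hdi hh₂
  calc (d ^ 2 + a₁ * d + a₀) * (h₂ * i * h₂' * h₁ * i * h₁')
      = (d - b₁) * ((d - b₂) * (h₂ * i * h₂')) * (h₁ * i * h₁') := by
        rw [hfact]; noncomm_ring
    _ = 1 := by rw [inv₂, mul_one, inv₁]
end
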